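/- Let D, A be symmetric n×n real positive definite matrices, let P0, P1 be symmetric n×n real matrices, let B̃, W̃ be n×n real matrices, and fix a nonzero x ∈ ℝⁿ such that xᵀ P̃ x > xᵀ A x and xᵀ P̃ x > xᵀ D x, where P̃ := W̃ᵀ P1 W̃ − B̃ᵀ P0 B̃. Let Ξ⁰(x) be the 2×2 matrix with entries m11 = xᵀ B̃ᵀ P0 B̃ x, m12 = xᵀ W̃ᵀ P1 W̃ x − xᵀ A x, m21 = m11 + xᵀ D x, m22 = m11 + xᵀ D x − xᵀ A x. Then, with β̂* := (xᵀ A x)/(xᵀ P̃ x) and γ̂* := 1 − (xᵀ D x)/(xᵀ P̃ x), the strategies y* = (β̂*, 1 − β̂*) and z* = (γ̂*, 1 − γ̂*) lie in Δ₂ and form a mixed saddle point of Ξ⁰(x), and the value satisfies y*ᵀ Ξ⁰(x) z* = xᵀ B̃ᵀ P0 B̃ x + xᵀ D x − (xᵀ D x)(xᵀ A x)/(xᵀ P̃ x). -/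

import Mathlib

open Matrix

/-- The probability simplex in ℝ²: vectors (β, 1-β) with β ∈ [0,1]. -/
def Δ₂ : Set (Fin 2 → ℝ) := {y | 0 ≤ y 0 ∧ 0 ≤ y 1 ∧ y 0 + y 1 = 1}

/-- Payoff yᵀ M z for a 2×2 matrix game. -/
def payoff (M : Matrix (Fin 2) (Fin 2) ℝ) (y z : Fin 2 → ℝ) : ℝ :=
  y 0 * M 0 0 * z 0 + y 0 * M 0 1 * z 1 + y 1 * M 1 0 * z 0 + y 1 * M 1 1 * z 1

/-- Mixed saddle point of M: row player minimizes, column player maximizes. -/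
def IsMixedSaddle (M : Matrix (Fin 2) (Fin 2) ℝ) (ys zs : Fin 2 → ℝ) : Prop :=
  ys ∈ Δ₂ ∧ zs ∈ Δ₂ ∧
    (∀ z ∈ Δ₂, payoff M ys z ≤ payoff M ys zs) ∧
    (∀ y ∈ Δ₂, payoff M ys zs ≤ payoff M y zs)

/-!
Both equilibrium strategies are equalizers: `y*` makes the defender's expected cost the same against
either adversary action, and `z*` makes it the same for either defender action. In a 2×2 game a pair
of equalizing strategies in `Δ₂` is a saddle point, since then neither player can change the payoff
by deviating. With `p = xᵀP̃x`, `m = xᵀB̃ᵀP0B̃x`, `a = xᵀAx`, `d = xᵀDx`, the matrix Ξ⁰(x) is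
`!![m, p + m - a; m + d, m + d - a]`; the equalizing conditions are linear in `β` and `γ`, and
`0 ≤ a, d < p` puts their solutions in `Δ₂`.
-/

lemma mem_Δ₂_iff (β : ℝ) : ![β, 1 - β] ∈ Δ₂ ↔ 0 ≤ β ∧ β ≤ 1 := by
  simp only [Δ₂, Set.mem_ofPred_eq, cons_val_zero, cons_val_one, sub_nonneg,
    add_sub_cancel, and_true]

lemma payoff_eq_of_cols_eq {M : Matrix (Fin 2) (Fin 2) ℝ} {y z : Fin 2 → ℝ} {v : ℝ} (hz : z ∈ Δ₂)
    (h₀ : y 0 * M 0 0 + y 1 * M 1 0 = v) (h₁ : y 0 * M 0 1 + y 1 * M 1 1 = v) :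
    payoff M y z = v := by
  obtain ⟨-, -, hz⟩ := hz
  calc payoff M y z = (y 0 * M 0 0 + y 1 * M 1 0) * z 0 + (y 0 * M 0 1 + y 1 * M 1 1) * z 1 := by
        unfold payoff; ring
    _ = v := by rw [h₀, h₁, ← mul_add, hz, mul_one]

lemma payoff_eq_of_rows_eq {M : Matrix (Fin 2) (Fin 2) ℝ} {y z : Fin 2 → ℝ} {v : ℝ} (hy : y ∈ Δ₂)
    (h₀ : M 0 0 * z 0 + M 0 1 * z 1 = v) (h₁ : M 1 0 * z 0 + M 1 1 * z 1 = v) :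
    payoff M y z = v := by
  obtain ⟨-, -, hy⟩ := hy
  calc payoff M y z = y 0 * (M 0 0 * z 0 + M 0 1 * z 1) + y 1 * (M 1 0 * z 0 + M 1 1 * z 1) := by
        unfold payoff; ring
    _ = v := by rw [h₀, h₁, ← add_mul, hy, one_mul]

lemma isMixedSaddle_of_equalizers {M : Matrix (Fin 2) (Fin 2) ℝ} {ys zs : Fin 2 → ℝ} {v : ℝ}
    (hys : ys ∈ Δ₂) (hzs : zs ∈ Δ₂) (hrow : ∀ z ∈ Δ₂, payoff M ys z = v)
    (hcol : ∀ y ∈ Δ₂, payoff M y zs = v) : IsMixedSaddle M ys zs :=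
  ⟨hys, hzs, fun z hz => (hrow z hz).trans (hrow zs hzs).symm |>.le,
    fun y hy => (hcol ys hys).trans (hcol y hy).symm |>.le⟩

lemma isMixedSaddle_takeover_game {p m a d : ℝ} (ha : 0 ≤ a) (hd : 0 ≤ d) (hpa : a < p)
    (hpd : d < p) :
    let M : Matrix (Fin 2) (Fin 2) ℝ := !![m, p + m - a; m + d, m + d - a]
    let ys : Fin 2 → ℝ := ![a / p, 1 - a / p]
    let zs : Fin 2 → ℝ := ![1 - d / p, 1 - (1 - d / p)]
    ys ∈ Δ₂ ∧ zs ∈ Δ₂ ∧ IsMixedSaddle M ys zs ∧ payoff M ys zs = m + d - d * a / p := by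
  intro M ys zs
  have hp : 0 < p := ha.trans_lt hpa
  have hys : ys ∈ Δ₂ := (mem_Δ₂_iff _).2
    ⟨div_nonneg ha hp.le, (div_le_one hp).2 hpa.le⟩
  have hzs : zs ∈ Δ₂ := (mem_Δ₂_iff _).2
    ⟨sub_nonneg.2 ((div_le_one hp).2 hpd.le), sub_le_self _ (div_nonneg hd hp.le)⟩
  have hrow : ∀ z ∈ Δ₂, payoff M ys z = m + d - d * a / p := by
    intro z hz
    apply payoff_eq_of_cols_eq hz <;>
      simp only [M, ys, of_apply, cons_val', cons_val_zero, cons_val_one, cons_val_fin_one] <;>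
      field_simp <;> ring
  have hcol : ∀ y ∈ Δ₂, payoff M y zs = m + d - d * a / p := by
    intro y hy
    apply payoff_eq_of_rows_eq hy <;>
      simp only [M, zs, of_apply, cons_val', cons_val_zero, cons_val_one, cons_val_fin_one,
        sub_sub_cancel] <;>
      field_simp <;> ring
  exact ⟨hys, hzs, isMixedSaddle_of_equalizers hys hzs hrow hcol, hrow zs hzs⟩

theorem stmt_13_general {n : ℕ} (D A P0 P1 Bt Wt : Matrix (Fin n) (Fin n) ℝ)
    (hD : D.PosDef) (hA : A.PosDef)
    (x : Fin n → ℝ)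
    (hA' : x ⬝ᵥ (Wtᵀ * P1 * Wt - Btᵀ * P0 * Bt) *ᵥ x > x ⬝ᵥ A *ᵥ x)
    (hD' : x ⬝ᵥ (Wtᵀ * P1 * Wt - Btᵀ * P0 * Bt) *ᵥ x > x ⬝ᵥ D *ᵥ x) :
    let qPt : ℝ := x ⬝ᵥ (Wtᵀ * P1 * Wt - Btᵀ * P0 * Bt) *ᵥ x
    let m11 : ℝ := x ⬝ᵥ (Btᵀ * P0 * Bt) *ᵥ x
    let M : Matrix (Fin 2) (Fin 2) ℝ :=
      !![m11, x ⬝ᵥ (Wtᵀ * P1 * Wt) *ᵥ x - x ⬝ᵥ A *ᵥ x;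
         m11 + x ⬝ᵥ D *ᵥ x, m11 + x ⬝ᵥ D *ᵥ x - x ⬝ᵥ A *ᵥ x]
    let β : ℝ := (x ⬝ᵥ A *ᵥ x) / qPt
    let γ : ℝ := 1 - (x ⬝ᵥ D *ᵥ x) / qPt
    let ys : Fin 2 → ℝ := ![β, 1 - β]
    let zs : Fin 2 → ℝ := ![γ, 1 - γ]
    ys ∈ Δ₂ ∧ zs ∈ Δ₂ ∧ IsMixedSaddle M ys zs ∧
    payoff M ys zs = x ⬝ᵥ (Btᵀ * P0 * Bt) *ᵥ x + x ⬝ᵥ D *ᵥ x -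
      (x ⬝ᵥ D *ᵥ x) * (x ⬝ᵥ A *ᵥ x) / qPt := by
  intro qPt m11 M β γ ys zs
  have hW : x ⬝ᵥ (Wtᵀ * P1 * Wt) *ᵥ x = qPt + m11 := by
    simp only [qPt, m11, sub_mulVec, dotProduct_sub, sub_add_cancel]
  have ha : 0 ≤ x ⬝ᵥ A *ᵥ x := by simpa using hA.posSemidef.dotProduct_mulVec_nonneg x
  have hd : 0 ≤ x ⬝ᵥ D *ᵥ x := by simpa using hD.posSemidef.dotProduct_mulVec_nonneg x
  simp only [M, hW]
  exact isMixedSaddle_takeover_game ha hd hA' hD'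

/-- n-dimensional FlipDyn, defender-controlled state: the given
strategies form a mixed saddle point of Ξ⁰(x) with the stated value. -/
theorem stmt_13 {n : ℕ} (D A P0 P1 Bt Wt : Matrix (Fin n) (Fin n) ℝ)
    (hD : D.PosDef) (hA : A.PosDef) (hP0 : P0.IsSymm) (hP1 : P1.IsSymm)
    (x : Fin n → ℝ) (hx : x ≠ 0)
    (hA' : x ⬝ᵥ (Wtᵀ * P1 * Wt - Btᵀ * P0 * Bt) *ᵥ x > x ⬝ᵥ A *ᵥ x)
    (hD' : x ⬝ᵥ (Wtᵀ * P1 * Wt - Btᵀ * P0 * Bt) *ᵥ x > x ⬝ᵥ D *ᵥ x) :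
    let qPt : ℝ := x ⬝ᵥ (Wtᵀ * P1 * Wt - Btᵀ * P0 * Bt) *ᵥ x
    let m11 : ℝ := x ⬝ᵥ (Btᵀ * P0 * Bt) *ᵥ x
    let M : Matrix (Fin 2) (Fin 2) ℝ :=
      !![m11, x ⬝ᵥ (Wtᵀ * P1 * Wt) *ᵥ x - x ⬝ᵥ A *ᵥ x;
         m11 + x ⬝ᵥ D *ᵥ x, m11 + x ⬝ᵥ D *ᵥ x - x ⬝ᵥ A *ᵥ x]
    let β : ℝ := (x ⬝ᵥ A *ᵥ x) / qPt
    let γ : ℝ := 1 - (x ⬝ᵥ D *ᵥ x) / qPt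
    let ys : Fin 2 → ℝ := ![β, 1 - β]
    let zs : Fin 2 → ℝ := ![γ, 1 - γ]
    ys ∈ Δ₂ ∧ zs ∈ Δ₂ ∧ IsMixedSaddle M ys zs ∧
    payoff M ys zs = x ⬝ᵥ (Btᵀ * P0 * Bt) *ᵥ x + x ⬝ᵥ D *ᵥ x -
      (x ⬝ᵥ D *ᵥ x) * (x ⬝ᵥ A *ᵥ x) / qPt :=
  stmt_13_general D A P0 P1 Bt Wt hD hA x hA' hD'
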